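/- arXiv:1411.5389 — 6 statements merged into one kernel-verified Lean document; each statement's English description precedes it below -/
import Mathlib

section
/- For a partition λ of n and the nilpotent Jordan matrix J_λ over a field F, the centralizer of J_λ in the full matrix algebra M_{n×n}(F) has dimension ‖λ'‖² = Σ_i (λ'_i)², where λ' is the conjugate partition. -/
open Finset

open scoped Classical in
/-- The nilpotent Jordan matrix of size `n` whose blocks have sizes `l 0, l 1, …`. -/
noncomputable def jordanMat (F : Type*) [Field F] (n : ℕ) (l : ℕ → ℕ) :
    Matrix (Fin n) (Fin n) F :=
  Matrix.of fun i j =>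
    if (j : ℕ) = (i : ℕ) + 1 ∧ ∀ s : ℕ, (∑ t ∈ Finset.range s, l t) ≠ (j : ℕ) then 1 else 0



namespace Stmt6Aux

def pbase (l : ℕ → ℕ) (b : ℕ) : ℕ := ∑ t ∈ Finset.range b, l t

theorem pbase_mono (l : ℕ → ℕ) : Monotone (pbase l) := fun _ _ h =>
  Finset.sum_le_sum_of_subset (Finset.range_subset_range.2 h)

theorem pbase_succ (l : ℕ → ℕ) (b : ℕ) : pbase l (b+1) = pbase l b + l b :=
  Finset.sum_range_succ l b

def blk (l : ℕ → ℕ) (N i : ℕ) : ℕ := Nat.findGreatest (fun b => pbase l b ≤ i) N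

def pos (l : ℕ → ℕ) (N i : ℕ) : ℕ := i - pbase l (blk l N i)

theorem decode (l : ℕ → ℕ) (N n : ℕ) (hln : pbase l N = n) {i : ℕ} (hi : i < n) :
    blk l N i < N ∧ pbase l (blk l N i) + pos l N i = i ∧ pos l N i < l (blk l N i) := by
  have h0 : pbase l (blk l N i) ≤ i :=
    Nat.findGreatest_spec (P := fun b => pbase l b ≤ i) (Nat.zero_le N) (by simp [pbase])
  have hle : blk l N i ≤ N := Nat.findGreatest_le N
  have hlt : blk l N i < N := by
    rcases eq_or_lt_of_le hle with h | h
    · exfalso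
      have := h0
      rw [h, hln] at this
      omega
    · exact h
  have h2 : i < pbase l (blk l N i + 1) := by
    by_contra h
    exact Nat.findGreatest_is_greatest (P := fun b => pbase l b ≤ i) (Nat.lt_succ_self _) hlt (Nat.le_of_not_lt h)
  rw [pbase_succ] at h2
  refine ⟨hlt, ?_, ?_⟩ <;> simp only [pos] <;> omega

theorem uniq (l : ℕ → ℕ) {b p b' p' : ℕ} (hp : p < l b) (hp' : p' < l b')
    (h : pbase l b + p = pbase l b' + p') : b = b' ∧ p = p' := by
  rcases lt_trichotomy b b' with hlt | he | hlt
  · have h1 : pbase l (b+1) ≤ pbase l b' := pbase_mono l hlt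
    have h2 := pbase_succ l b
    omega
  · subst he; omega
  · have h1 : pbase l (b'+1) ≤ pbase l b := pbase_mono l hlt
    have h2 := pbase_succ l b'
    omega

theorem enc_lt (l : ℕ → ℕ) (N n : ℕ) (hln : pbase l N = n) {b p : ℕ}
    (hb : b < N) (hp : p < l b) : pbase l b + p < n := by
  have h1 := pbase_succ l b
  have h2 : pbase l (b+1) ≤ pbase l N := pbase_mono l hb
  omega

theorem blk_pos_enc (l : ℕ → ℕ) (N n : ℕ) (hln : pbase l N = n) {b p : ℕ}
    (hb : b < N) (hp : p < l b) :
    blk l N (pbase l b + p) = b ∧ pos l N (pbase l b + p) = p := by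
  obtain ⟨h1, h2, h3⟩ := decode l N n hln (enc_lt l N n hln hb hp)
  exact uniq l h3 hp (by omega)

theorem not_bdry (l : ℕ → ℕ) {c q : ℕ} (hq1 : 1 ≤ q) (hq : q < l c) (s : ℕ) :
    pbase l s ≠ pbase l c + q := by
  rcases le_or_gt s c with h | h
  · have := pbase_mono l h
    omega
  · have h1 : pbase l (c+1) ≤ pbase l s := pbase_mono l h
    have h2 := pbase_succ l c
    omega

theorem jordan_apply (F : Type*) [Field F] (l : ℕ → ℕ) (N n : ℕ)
    (hln : pbase l N = n) {b p c q : ℕ}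
    (hp : p < l b) (hq : q < l c) (i j : Fin n)
    (hi : (i : ℕ) = pbase l b + p) (hj : (j : ℕ) = pbase l c + q) :
    jordanMat F n l i j = if b = c ∧ q = p + 1 then 1 else 0 := by
  classical
  show (if (j : ℕ) = (i : ℕ) + 1 ∧ ∀ s : ℕ, (∑ t ∈ Finset.range s, l t) ≠ (j : ℕ) then (1:F) else 0) = _
  congr 1
  rw [eq_iff_iff]
  constructor
  · rintro ⟨h1, h2⟩
    have hq1 : 1 ≤ q := by
      by_contra h
      exact h2 c (by simp only [hj]; show pbase l c = _; omega)
    have := uniq l (show q - 1 < l c by omega) hp (by omega : pbase l c + (q-1) = pbase l b + p)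
    exact ⟨this.1.symm, by omega⟩
  · rintro ⟨rfl, rfl⟩
    refine ⟨by omega, fun s => ?_⟩
    show pbase l s ≠ _
    rw [hj]
    exact not_bdry l (by omega) hq s

end Stmt6Aux

namespace Stmt6Aux

variable (F : Type*) [Field F] (l : ℕ → ℕ) (N n : ℕ)

theorem mul_jordan (hln : pbase l N = n) (A : Matrix (Fin n) (Fin n) F)
    (i : Fin n) {c q : ℕ} (hc : c < N) (hq : q < l c) :
    (A * jordanMat F n l) i ⟨pbase l c + q, enc_lt l N n hln hc hq⟩ =
      if h : 1 ≤ q then A i ⟨pbase l c + (q-1), enc_lt l N n hln hc (by omega)⟩ else 0 := by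
  classical
  rw [Matrix.mul_apply]
  split_ifs with h
  · rw [Finset.sum_eq_single (⟨pbase l c + (q-1), enc_lt l N n hln hc (by omega)⟩ : Fin n)]
    · rw [jordan_apply F l N n hln (show q - 1 < l c by omega) hq _ _ rfl rfl]
      rw [if_pos ⟨rfl, by omega⟩, mul_one]
    · intro k _ hk
      obtain ⟨hbk, hek, hpk⟩ := decode l N n hln k.isLt
      rw [jordan_apply F l N n hln hpk hq k _ (by omega) rfl]
      rw [if_neg, mul_zero]
      rintro ⟨hc2, h2⟩
      apply hk
      apply Fin.ext
      show (k : ℕ) = pbase l c + (q - 1)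
      rw [← hc2]
      omega
    · intro h; exact absurd (Finset.mem_univ _) h
  · apply Finset.sum_eq_zero
    intro k _
    obtain ⟨hbk, hek, hpk⟩ := decode l N n hln k.isLt
    rw [jordan_apply F l N n hln hpk hq k _ (by omega) rfl]
    rw [if_neg, mul_zero]
    rintro ⟨rfl, h2⟩
    omega

theorem jordan_mul (hln : pbase l N = n) (A : Matrix (Fin n) (Fin n) F)
    {b p : ℕ} (hb : b < N) (hp : p < l b) (j : Fin n) :
    (jordanMat F n l * A) ⟨pbase l b + p, enc_lt l N n hln hb hp⟩ j =
      if h : p + 1 < l b then A ⟨pbase l b + (p+1), enc_lt l N n hln hb h⟩ j else 0 := by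
  classical
  rw [Matrix.mul_apply]
  split_ifs with h
  · rw [Finset.sum_eq_single (⟨pbase l b + (p+1), enc_lt l N n hln hb h⟩ : Fin n)]
    · rw [jordan_apply F l N n hln hp h _ _ rfl rfl]
      simp
    · intro k _ hk
      obtain ⟨hbk, hek, hpk⟩ := decode l N n hln k.isLt
      rw [jordan_apply F l N n hln hp hpk _ k rfl (by omega)]
      rw [if_neg, zero_mul]
      rintro ⟨hb2, h2⟩
      apply hk
      apply Fin.ext
      show (k : ℕ) = pbase l b + (p + 1)
      rw [hb2]
      omega
    · intro h; exact absurd (Finset.mem_univ _) h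
  · apply Finset.sum_eq_zero
    intro k _
    obtain ⟨hbk, hek, hpk⟩ := decode l N n hln k.isLt
    rw [jordan_apply F l N n hln hp hpk _ k rfl (by omega)]
    rw [if_neg, zero_mul]
    rintro ⟨rfl, h2⟩
    -- k is in block b with position p+1, but p+1 ≥ l b = l blk k contradiction
    omega

/-- The blockwise commutation relation. -/
def Rel (hln : pbase l N = n) (A : Matrix (Fin n) (Fin n) F) : Prop :=
  ∀ b c p q (hb : b < N) (hc : c < N) (hp : p < l b) (hq : q < l c),
    (if _ : 1 ≤ q then
        A ⟨pbase l b + p, enc_lt l N n hln hb hp⟩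
          ⟨pbase l c + (q-1), enc_lt l N n hln hc (by omega)⟩
      else 0) =
    (if h : p + 1 < l b then
        A ⟨pbase l b + (p+1), enc_lt l N n hln hb h⟩
          ⟨pbase l c + q, enc_lt l N n hln hc hq⟩
      else 0)

theorem commute_iff (hln : pbase l N = n) (A : Matrix (Fin n) (Fin n) F) :
    A * jordanMat F n l = jordanMat F n l * A ↔ Rel F l N n hln A := by
  constructor
  · intro h b c p q hb hc hp hq
    rw [← mul_jordan F l N n hln A _ hc hq, ← jordan_mul F l N n hln A hb hp, h]
  · intro h
    ext i j
    obtain ⟨hbi, hei, hpi⟩ := decode l N n hln i.isLt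
    obtain ⟨hbj, hej, hpj⟩ := decode l N n hln j.isLt
    have hi : i = ⟨pbase l (blk l N ↑i) + pos l N ↑i, enc_lt l N n hln hbi hpi⟩ :=
      Fin.ext (show (i : ℕ) = pbase l (blk l N ↑i) + pos l N ↑i by omega)
    have hj : j = ⟨pbase l (blk l N ↑j) + pos l N ↑j, enc_lt l N n hln hbj hpj⟩ :=
      Fin.ext (show (j : ℕ) = pbase l (blk l N ↑j) + pos l N ↑j by omega)
    rw [hi, hj, mul_jordan F l N n hln A _ hbj hpj, jordan_mul F l N n hln A hbi hpi]
    have := h (blk l N ↑i) (blk l N ↑j) (pos l N ↑i) (pos l N ↑j) hbi hbj hpi hpj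
    split_ifs at this ⊢ with h1 h2 h2 <;> exact this

end Stmt6Aux

namespace Stmt6Aux

variable (F : Type*) [Field F] (l : ℕ → ℕ) (N n : ℕ)

theorem rel_step (hln : pbase l N = n) {A : Matrix (Fin n) (Fin n) F}
    (hA : Rel F l N n hln A) {b c p q : ℕ} (hb : b < N) (hc : c < N)
    (hp1 : p + 1 < l b) (hq1 : 1 ≤ q) (hq : q < l c)
    (i i' j j' : Fin n) (hi : (i:ℕ) = pbase l b + p) (hi' : (i':ℕ) = pbase l b + (p+1))
    (hj : (j:ℕ) = pbase l c + (q-1)) (hj' : (j':ℕ) = pbase l c + q) :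
    A i j = A i' j' := by
  have h := hA b c p q hb hc (by omega) hq
  rw [dif_pos hq1, dif_pos hp1] at h
  have e1 : i = ⟨pbase l b + p, enc_lt l N n hln hb (Nat.lt_of_succ_lt hp1)⟩ := Fin.ext hi
  have e2 : j = ⟨pbase l c + (q-1), enc_lt l N n hln hc (Nat.lt_of_le_of_lt (Nat.sub_le q 1) hq)⟩ := Fin.ext hj
  have e3 : i' = ⟨pbase l b + (p+1), enc_lt l N n hln hb hp1⟩ := Fin.ext hi'
  have e4 : j' = ⟨pbase l c + q, enc_lt l N n hln hc hq⟩ := Fin.ext hj'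
  subst e1 e2 e3 e4
  exact h

theorem rel_zero1 (hln : pbase l N = n) {A : Matrix (Fin n) (Fin n) F}
    (hA : Rel F l N n hln A) {b c p : ℕ} (hb : b < N) (hc : c < N)
    (hp1 : p + 1 < l b) (hc0 : 0 < l c)
    (i j : Fin n) (hi : (i:ℕ) = pbase l b + (p+1)) (hj : (j:ℕ) = pbase l c) :
    A i j = 0 := by
  have h := hA b c p 0 hb hc (by omega) hc0
  rw [dif_neg (by omega), dif_pos hp1] at h
  have e1 : i = ⟨pbase l b + (p+1), enc_lt l N n hln hb hp1⟩ := Fin.ext hi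
  have e2 : j = ⟨pbase l c + 0, enc_lt l N n hln hc hc0⟩ :=
    Fin.ext (show (j:ℕ) = pbase l c + 0 by omega)
  subst e1 e2
  exact h.symm

theorem rel_zero2 (hln : pbase l N = n) {A : Matrix (Fin n) (Fin n) F}
    (hA : Rel F l N n hln A) {b c p q : ℕ} (hb : b < N) (hc : c < N)
    (hp : p < l b) (hp1 : ¬ p + 1 < l b) (hq1 : 1 ≤ q) (hq : q < l c)
    (i j : Fin n) (hi : (i:ℕ) = pbase l b + p) (hj : (j:ℕ) = pbase l c + (q-1)) :
    A i j = 0 := by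
  have h := hA b c p q hb hc hp hq
  rw [dif_pos hq1, dif_neg hp1] at h
  have e1 : i = ⟨pbase l b + p, enc_lt l N n hln hb hp⟩ := Fin.ext hi
  have e2 : j = ⟨pbase l c + (q-1), enc_lt l N n hln hc (Nat.lt_of_le_of_lt (Nat.sub_le q 1) hq)⟩ := Fin.ext hj
  subst e1 e2
  exact h

theorem Z1 (hln : pbase l N = n) {A : Matrix (Fin n) (Fin n) F}
    (hA : Rel F l N n hln A) :
    ∀ q b c p, b < N → c < N → p < l b → q < l c → q < p →
      ∀ i j : Fin n, (i:ℕ) = pbase l b + p → (j:ℕ) = pbase l c + q → A i j = 0 := by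
  intro q
  induction q with
  | zero =>
    intro b c p hb hc hp hq hlt i j hi hj
    exact rel_zero1 F l N n hln hA hb hc (show (p-1)+1 < l b by omega) hq i j (by omega)
      (by omega)
  | succ q ih =>
    intro b c p hb hc hp hq hlt i j hi hj
    have step := rel_step F l N n hln hA hb hc (show (p-1)+1 < l b by omega)
      (show 1 ≤ q+1 by omega) hq
      ⟨pbase l b + (p-1), enc_lt l N n hln hb (by omega)⟩ i
      ⟨pbase l c + q, enc_lt l N n hln hc (by omega)⟩ j
      rfl (by omega) (show pbase l c + q = pbase l c + (q+1-1) by omega) (by omega)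
    rw [← step]
    exact ih b c (p-1) hb hc (by omega) (by omega) (by omega) _ _ rfl rfl

theorem Z2 (hln : pbase l N = n) {A : Matrix (Fin n) (Fin n) F}
    (hA : Rel F l N n hln A) :
    ∀ d b c p q, b < N → c < N → p < l b → q < l c → l b - 1 - p = d →
      l b + q < l c + p →
      ∀ i j : Fin n, (i:ℕ) = pbase l b + p → (j:ℕ) = pbase l c + q → A i j = 0 := by
  intro d
  induction d with
  | zero =>
    intro b c p q hb hc hp hq hd hineq i j hi hj
    exact rel_zero2 F l N n hln hA hb hc hp (by omega) (show 1 ≤ q+1 by omega)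
      (show q+1 < l c by omega) i j hi (by omega)
  | succ d ih =>
    intro b c p q hb hc hp hq hd hineq i j hi hj
    have step := rel_step F l N n hln hA hb hc (show p+1 < l b by omega)
      (show 1 ≤ q+1 by omega) (show q+1 < l c by omega)
      i ⟨pbase l b + (p+1), enc_lt l N n hln hb (by omega)⟩
      j ⟨pbase l c + (q+1), enc_lt l N n hln hc (by omega)⟩
      hi rfl (by omega) rfl
    rw [step]
    exact ih b c (p+1) (q+1) hb hc (by omega) (by omega) (by omega) (by omega) _ _ rfl rfl

theorem Dg (hln : pbase l N = n) {A : Matrix (Fin n) (Fin n) F}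
    (hA : Rel F l N n hln A) :
    ∀ p b c q, b < N → c < N → p < l b → q < l c → p ≤ q →
      ∀ i j i0 j0 : Fin n, (i:ℕ) = pbase l b + p → (j:ℕ) = pbase l c + q →
        (i0:ℕ) = pbase l b → (j0:ℕ) = pbase l c + (q - p) → A i j = A i0 j0 := by
  intro p
  induction p with
  | zero =>
    intro b c q hb hc hp hq hpq i j i0 j0 hi hj hi0 hj0
    rw [show i = i0 from Fin.ext (by omega), show j = j0 from Fin.ext (by omega)]
  | succ p ih =>
    intro b c q hb hc hp hq hpq i j i0 j0 hi hj hi0 hj0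
    have step := rel_step F l N n hln hA hb hc (show p+1 < l b by omega)
      (show 1 ≤ q by omega) hq
      ⟨pbase l b + p, enc_lt l N n hln hb (by omega)⟩ i
      ⟨pbase l c + (q-1), enc_lt l N n hln hc (by omega)⟩ j
      rfl hi rfl hj
    rw [← step]
    exact ih b c (q-1) hb hc (by omega) (by omega) (by omega) _ _ i0 j0 rfl rfl hi0
      (by omega)

end Stmt6Aux

namespace Stmt6Aux

variable (F : Type*) [Field F] (l : ℕ → ℕ) (N n : ℕ)

/-- Index type for the basis of the centralizer. -/
abbrev Idx (l : ℕ → ℕ) (N : ℕ) := (b : Fin N) × (c : Fin N) × Fin (min (l b) (l c))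

noncomputable def phiFun (f : Idx l N → F) : Matrix (Fin n) (Fin n) F :=
  Matrix.of fun i j =>
    if h : blk l N ↑i < N ∧ blk l N ↑j < N ∧ pos l N ↑i < l (blk l N ↑i) ∧
        pos l N ↑j < l (blk l N ↑j) ∧ pos l N ↑i ≤ pos l N ↑j ∧
        l (blk l N ↑j) ≤ l (blk l N ↑i) + (pos l N ↑j - pos l N ↑i)
    then f ⟨⟨blk l N ↑i, h.1⟩, ⟨blk l N ↑j, h.2.1⟩,
        ⟨l (blk l N ↑j) - 1 - (pos l N ↑j - pos l N ↑i),
          Nat.lt_min.mpr (show l (blk l N ↑j) - 1 - (pos l N ↑j - pos l N ↑i) < l (blk l N ↑i) ∧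
            l (blk l N ↑j) - 1 - (pos l N ↑j - pos l N ↑i) < l (blk l N ↑j) by omega)⟩⟩
    else 0

theorem phiFun_apply (hln : pbase l N = n) (f : Idx l N → F) {b c p q : ℕ}
    (hb : b < N) (hc : c < N) (hp : p < l b) (hq : q < l c) (i j : Fin n)
    (hi : (i:ℕ) = pbase l b + p) (hj : (j:ℕ) = pbase l c + q) :
    phiFun F l N n f i j =
      if h : p ≤ q ∧ l c ≤ l b + (q - p) then
        f ⟨⟨b, hb⟩, ⟨c, hc⟩, ⟨l c - 1 - (q - p),
          Nat.lt_min.mpr (show l c - 1 - (q - p) < l b ∧ l c - 1 - (q - p) < l c by omega)⟩⟩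
      else 0 := by
  obtain ⟨e1, e2⟩ := blk_pos_enc l N n hln hb hp
  obtain ⟨e3, e4⟩ := blk_pos_enc l N n hln hc hq
  have hbi : blk l N ↑i = b := by rw [hi]; exact e1
  have hpi : pos l N ↑i = p := by rw [hi]; exact e2
  have hbj : blk l N ↑j = c := by rw [hj]; exact e3
  have hpj : pos l N ↑j = q := by rw [hj]; exact e4
  subst hbi hpi hbj hpj
  simp only [phiFun, Matrix.of_apply]
  split_ifs with h1 h2 h2
  · rfl
  · omega
  · omega
  · rfl

noncomputable def psi (hln : pbase l N = n) (A : Matrix (Fin n) (Fin n) F)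
    (x : Idx l N) : F :=
  A ⟨pbase l ↑x.1 + 0,
      enc_lt l N n hln x.1.isLt
        (show 0 < l ↑x.1 by have h := x.2.2.isLt; omega)⟩
    ⟨pbase l ↑x.2.1 + (l ↑x.2.1 - 1 - ↑x.2.2),
      enc_lt l N n hln x.2.1.isLt
        (show l ↑x.2.1 - 1 - ↑x.2.2 < l ↑x.2.1 by have h := x.2.2.isLt; omega)⟩

theorem phiFun_psi (hln : pbase l N = n) (A : Matrix (Fin n) (Fin n) F)
    (hA : Rel F l N n hln A) : phiFun F l N n (psi F l N n hln A) = A := by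
  ext i j
  obtain ⟨hbi, hei, hpi⟩ := decode l N n hln i.isLt
  obtain ⟨hbj, hej, hpj⟩ := decode l N n hln j.isLt
  rw [phiFun_apply F l N n hln _ hbi hbj hpi hpj i j (by omega) (by omega)]
  split_ifs with h
  · -- psi A ⟨blk i, blk j, t⟩ = A i j via the diagonal lemma
    refine (Dg F l N n hln hA (pos l N ↑i) (blk l N ↑i) (blk l N ↑j) (pos l N ↑j)
      hbi hbj hpi hpj h.1 i j _ _ (by omega) (by omega) ?_ ?_).symm
    · show pbase l (blk l N ↑i) + 0 = pbase l (blk l N ↑i)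
      omega
    · show pbase l (blk l N ↑j) +
          (l (blk l N ↑j) - 1 - (l (blk l N ↑j) - 1 - (pos l N ↑j - pos l N ↑i))) =
        pbase l (blk l N ↑j) + (pos l N ↑j - pos l N ↑i)
      omega
  · rcases Nat.lt_or_ge (pos l N ↑j) (pos l N ↑i) with hlt | hge
    · exact (Z1 F l N n hln hA (pos l N ↑j) (blk l N ↑i) (blk l N ↑j) (pos l N ↑i)
        hbi hbj hpi hpj hlt i j (by omega) (by omega)).symm
    · exact (Z2 F l N n hln hA (l (blk l N ↑i) - 1 - pos l N ↑i)
        (blk l N ↑i) (blk l N ↑j) (pos l N ↑i) (pos l N ↑j)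
        hbi hbj hpi hpj rfl (by omega) i j (by omega) (by omega)).symm

theorem psi_phiFun (hln : pbase l N = n) (f : Idx l N → F) :
    psi F l N n hln (phiFun F l N n f) = f := by
  funext x
  obtain ⟨b, c, t⟩ := x
  have ht : (t : ℕ) < min (l ↑b) (l ↑c) := t.isLt
  simp only [psi]
  rw [phiFun_apply F l N n hln f b.isLt c.isLt
      (show 0 < l ↑b by omega) (show l ↑c - 1 - ↑t < l ↑c by omega) _ _ rfl rfl]
  rw [dif_pos (show 0 ≤ l ↑c - 1 - ↑t ∧ l ↑c ≤ l ↑b + (l ↑c - 1 - ↑t - 0) by omega)]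
  have e : l ↑c - 1 - (l ↑c - 1 - ↑t - 0) = ↑t := by omega
  simp only [e, Fin.eta]

/-- `phiFun f` satisfies the commutation relation. -/
theorem rel_phiFun (hln : pbase l N = n) (f : Idx l N → F) :
    Rel F l N n hln (phiFun F l N n f) := by
  intro b c p q hb hc hp hq
  have h1 := phiFun_apply F l N n hln f hb hc hp
    (show q - 1 < l c from Nat.lt_of_le_of_lt (Nat.sub_le q 1) hq)
    ⟨pbase l b + p, enc_lt l N n hln hb hp⟩
    ⟨pbase l c + (q-1), enc_lt l N n hln hc (Nat.lt_of_le_of_lt (Nat.sub_le q 1) hq)⟩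
    rfl rfl
  split_ifs with hq1 hp1 hp1
  · rw [h1]
    have h2 := phiFun_apply F l N n hln f hb hc hp1 hq
      ⟨pbase l b + (p+1), enc_lt l N n hln hb hp1⟩
      ⟨pbase l c + q, enc_lt l N n hln hc hq⟩ rfl rfl
    rw [h2]
    split_ifs with g1 g2 g2
    · have e : q - 1 - p = q - (p + 1) := by omega
      simp only [e]
    · omega
    · omega
    · rfl
  · -- q ≥ 1, p+1 = l b : LHS must be 0
    rw [h1, dif_neg (by omega)]
  · -- q = 0, p + 1 < l b : RHS must be 0
    have h2 := phiFun_apply F l N n hln f hb hc hp1 hq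
      ⟨pbase l b + (p+1), enc_lt l N n hln hb hp1⟩
      ⟨pbase l c + q, enc_lt l N n hln hc hq⟩ rfl rfl
    rw [h2, dif_neg (by omega)]
  · rfl

end Stmt6Aux

namespace Stmt6Aux

variable (F : Type*) [Field F] (l : ℕ → ℕ) (N n : ℕ)

noncomputable def Phi : (Idx l N → F) →ₗ[F] Matrix (Fin n) (Fin n) F where
  toFun := phiFun F l N n
  map_add' f g := by
    ext i j
    simp only [phiFun, Matrix.of_apply, Matrix.add_apply]
    split_ifs <;> simp
  map_smul' a f := by
    ext i j
    simp only [phiFun, Matrix.of_apply, Matrix.smul_apply, RingHom.id_apply]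
    split_ifs <;> simp

theorem card_idx : Fintype.card (Idx l N) = ∑ b ∈ Finset.range N, ∑ c ∈ Finset.range N, min (l b) (l c) := by
  simp only [Idx, Fintype.card_sigma, Fintype.card_fin]
  calc (∑ b : Fin N, ∑ c : Fin N, min (l ↑b) (l ↑c))
      = ∑ b : Fin N, ∑ c ∈ Finset.range N, min (l ↑b) (l c) :=
        Finset.sum_congr rfl fun b _ => Fin.sum_univ_eq_sum_range (fun c => min (l ↑b) (l c)) N
    _ = ∑ b ∈ Finset.range N, ∑ c ∈ Finset.range N, min (l b) (l c) :=
        Fin.sum_univ_eq_sum_range (fun b => ∑ c ∈ Finset.range N, min (l b) (l c)) N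

theorem sum_min (hl : Antitone l) :
    ∑ b ∈ Finset.range N, ∑ c ∈ Finset.range N, min (l b) (l c) =
      ∑ k ∈ Finset.range (l 0), ((Finset.range N).filter (fun j => k + 1 ≤ l j)).card ^ 2 := by
  classical
  have hmin : ∀ b c : ℕ, min (l b) (l c) =
      ∑ k ∈ Finset.range (l 0), (if k + 1 ≤ l b ∧ k + 1 ≤ l c then 1 else 0) := by
    intro b c
    have h1 : l b ≤ l 0 := hl (Nat.zero_le b)
    have h2 : l c ≤ l 0 := hl (Nat.zero_le c)
    have h3 : (Finset.range (l 0)).filter (fun k => k + 1 ≤ l b ∧ k + 1 ≤ l c) =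
        Finset.range (min (l b) (l c)) := by
      ext k
      simp only [Finset.mem_filter, Finset.mem_range]
      omega
    calc min (l b) (l c) = (Finset.range (min (l b) (l c))).card := (Finset.card_range _).symm
      _ = _ := by rw [← h3, Finset.card_filter]
  have step : ∀ k, (∑ b ∈ Finset.range N, ∑ c ∈ Finset.range N,
      if k + 1 ≤ l b ∧ k + 1 ≤ l c then (1:ℕ) else 0) =
      ((Finset.range N).filter (fun j => k + 1 ≤ l j)).card ^ 2 := by
    intro k
    have inner : ∀ b, (∑ c ∈ Finset.range N, if k + 1 ≤ l b ∧ k + 1 ≤ l c then (1:ℕ) else 0) =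
        (if k + 1 ≤ l b then 1 else 0) * ((Finset.range N).filter (fun j => k + 1 ≤ l j)).card := by
      intro b
      by_cases h : k + 1 ≤ l b
      · simp only [h, true_and, if_true, one_mul, Finset.card_filter]
      · simp [h]
    rw [Finset.sum_congr rfl fun b _ => inner b, ← Finset.sum_mul, ← Finset.card_filter, sq]
  calc ∑ b ∈ Finset.range N, ∑ c ∈ Finset.range N, min (l b) (l c)
      = ∑ b ∈ Finset.range N, ∑ c ∈ Finset.range N, ∑ k ∈ Finset.range (l 0),
          (if k + 1 ≤ l b ∧ k + 1 ≤ l c then 1 else 0) :=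
        Finset.sum_congr rfl fun b _ => Finset.sum_congr rfl fun c _ => hmin b c
    _ = ∑ b ∈ Finset.range N, ∑ k ∈ Finset.range (l 0), ∑ c ∈ Finset.range N,
          (if k + 1 ≤ l b ∧ k + 1 ≤ l c then 1 else 0) :=
        Finset.sum_congr rfl fun b _ => Finset.sum_comm
    _ = ∑ k ∈ Finset.range (l 0), ∑ b ∈ Finset.range N, ∑ c ∈ Finset.range N,
          (if k + 1 ≤ l b ∧ k + 1 ≤ l c then 1 else 0) := Finset.sum_comm
    _ = _ := Finset.sum_congr rfl fun k _ => step k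

end Stmt6Aux

/-- The centralizer of `J_λ` in the full matrix algebra has dimension `‖λ'‖²`. -/
theorem stmt_6 (F : Type*) [Field F] (n N : ℕ) (l : ℕ → ℕ)
    (hl : Antitone l) (hlN : ∀ i, N ≤ i → l i = 0)
    (hln : ∑ i ∈ Finset.range N, l i = n)
    (S : Submodule F (Matrix (Fin n) (Fin n) F))
    (hS : ∀ A, A ∈ S ↔ A * jordanMat F n l = jordanMat F n l * A) :
    Module.finrank F S =
      ∑ k ∈ Finset.range (l 0),
        (((Finset.range N).filter (fun j => k + 1 ≤ l j)).card) ^ 2 := by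
  classical
  have hn : Stmt6Aux.pbase l N = n := hln
  have hrange : LinearMap.range (Stmt6Aux.Phi F l N n) = S := by
    ext A
    constructor
    · rintro ⟨f, rfl⟩
      exact (hS _).mpr ((Stmt6Aux.commute_iff F l N n hn _).mpr
        (Stmt6Aux.rel_phiFun F l N n hn f))
    · intro hA
      exact ⟨Stmt6Aux.psi F l N n hn A, Stmt6Aux.phiFun_psi F l N n hn A
        ((Stmt6Aux.commute_iff F l N n hn A).mp ((hS A).mp hA))⟩
  have hinj : Function.Injective (Stmt6Aux.Phi F l N n) := by
    intro f g h
    have h2 := congrArg (Stmt6Aux.psi F l N n hn) h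
    rwa [show (Stmt6Aux.Phi F l N n) f = Stmt6Aux.phiFun F l N n f from rfl,
      show (Stmt6Aux.Phi F l N n) g = Stmt6Aux.phiFun F l N n g from rfl,
      Stmt6Aux.psi_phiFun, Stmt6Aux.psi_phiFun] at h2
  rw [← hrange, LinearMap.finrank_range_of_inj hinj, Module.finrank_pi,
    Stmt6Aux.card_idx, Stmt6Aux.sum_min l N hl]
end

section
/- For the gap array G^λ defined by G^λ_{i,j} = λ_i − λ_j if λ_i > λ_j, G^λ_{i,j} = 1 if λ_i = λ_j and i ≤ j, and G^λ_{i,j} = 0 otherwise, one has Σ_{i,j} G^λ_{i,j} = nℓ − n − 2n(λ) + Σ_i m_i²/2 + ℓ/2, where λ is a partition of n with ℓ parts, m_i is the multiplicity of the part i in λ, and n(λ) = Σ_j (j−1)λ_j. -/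
open Finset

/-- The total size of the gap array `G^λ` equals
`nℓ − n − 2n(λ) + Σ_i m_i²/2 + ℓ/2`. -/
theorem stmt_8 (n ℓ : ℕ) (l : ℕ → ℕ)
    (hl : Antitone l) (hpos : ∀ i, i < ℓ → 0 < l i) (hl0 : ∀ i, ℓ ≤ i → l i = 0)
    (hsum : ∑ i ∈ Finset.range ℓ, l i = n) :
    (∑ i ∈ Finset.range ℓ, ∑ j ∈ Finset.range ℓ,
        (if l j < l i then ((l i - l j : ℕ) : ℚ)
         else if l i = l j ∧ i ≤ j then 1 else 0)) =
      (n : ℚ) * ℓ - n - 2 * (∑ j ∈ Finset.range ℓ, (j : ℚ) * l j) +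
        (∑ k ∈ Finset.range (l 0),
          (((((Finset.range ℓ).filter (fun j => l j = k + 1)).card : ℚ)) ^ 2)) / 2 +
        (ℓ : ℚ) / 2 := by
  -- Step 1: split each summand
  have key : ∀ i ∈ range ℓ, ∀ j ∈ range ℓ,
      (if l j < l i then ((l i - l j : ℕ) : ℚ)
       else if l i = l j ∧ i ≤ j then 1 else 0)
      = (if i < j then ((l i : ℚ) - l j) else 0)
        + (if l i = l j ∧ i ≤ j then (1:ℚ) else 0) := by
    intro i _ j _
    by_cases h : l j < l i
    · have hij : i < j := lt_of_not_ge fun hc => absurd (hl hc) (not_le.2 h)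
      have hne : ¬(l i = l j ∧ i ≤ j) := fun hc => by omega
      rw [if_pos h, if_pos hij, if_neg hne, Nat.cast_sub h.le]
      ring
    · rw [if_neg h]
      by_cases hc : l i = l j ∧ i ≤ j
      · rw [if_pos hc]
        rcases hc with ⟨he, _⟩
        by_cases hij : i < j
        · rw [if_pos hij, he]; ring
        · rw [if_neg hij]; ring
      · rw [if_neg hc]
        have hij : ¬ i < j := by
          intro hij
          exact hc ⟨le_antisymm (le_of_not_gt h) (hl hij.le), hij.le⟩
        rw [if_neg hij]; ring
  rw [Finset.sum_congr rfl fun i hi => Finset.sum_congr rfl fun j hj => key i hi j hj]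
  simp only [Finset.sum_add_distrib]
  -- Part A
  have hA : (∑ i ∈ range ℓ, ∑ j ∈ range ℓ, if i < j then ((l i:ℚ) - l j) else 0)
      = (n:ℚ) * ℓ - n - 2 * ∑ j ∈ range ℓ, (j:ℚ) * l j := by
    have e1 : ∀ i j : ℕ, (if i < j then ((l i:ℚ) - l j) else 0)
        = (if i < j then (l i:ℚ) else 0) - (if i < j then (l j:ℚ) else 0) := by
      intro i j; split_ifs <;> ring
    simp only [e1, Finset.sum_sub_distrib]
    have e2 : ∀ i ∈ range ℓ, (∑ j ∈ range ℓ, if i < j then (l i:ℚ) else 0)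
        = (l i:ℚ) * ((ℓ:ℚ) - (i+1)) := by
      intro i hi
      rw [← Finset.sum_filter, Finset.sum_const, nsmul_eq_mul]
      have hf : (range ℓ).filter (fun j => i < j) = Finset.Ico (i+1) ℓ := by
        ext j; simp only [mem_filter, mem_range, mem_Ico]; omega
      have hi' : i < ℓ := mem_range.mp hi
      rw [hf, Nat.card_Ico, Nat.cast_sub (by omega : i + 1 ≤ ℓ)]
      push_cast
      ring
    have e3 : ∀ j ∈ range ℓ, (∑ i ∈ range ℓ, if i < j then (l j:ℚ) else 0)
        = (l j:ℚ) * j := by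
      intro j hj
      rw [← Finset.sum_filter, Finset.sum_const, nsmul_eq_mul]
      have hf : (range ℓ).filter (fun i => i < j) = range j := by
        ext i; simp only [mem_filter, mem_range]
        have := mem_range.mp hj; omega
      rw [hf, Finset.card_range]
      ring
    rw [Finset.sum_congr rfl e2, Finset.sum_comm, Finset.sum_congr rfl e3]
    have hn : (∑ i ∈ range ℓ, (l i : ℚ)) = n := by exact_mod_cast hsum
    have key2 : ∑ i ∈ range ℓ, (l i:ℚ) * ((ℓ:ℚ) - (i+1))
        = (ℓ:ℚ) * (∑ i ∈ range ℓ, (l i:ℚ)) - (∑ i ∈ range ℓ, (l i:ℚ))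
          - (∑ i ∈ range ℓ, (i:ℚ) * l i) := by
      rw [Finset.mul_sum, ← Finset.sum_sub_distrib, ← Finset.sum_sub_distrib]
      exact Finset.sum_congr rfl fun i _ => by ring
    have key3 : ∑ j ∈ range ℓ, (l j:ℚ) * j = ∑ j ∈ range ℓ, (j:ℚ) * l j :=
      Finset.sum_congr rfl fun j _ => mul_comm _ _
    rw [key2, key3, hn]
    ring
  -- Part B
  have hB : (∑ i ∈ range ℓ, ∑ j ∈ range ℓ, if l i = l j ∧ i ≤ j then (1:ℚ) else 0)
      = (∑ k ∈ range (l 0),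
          ((((range ℓ).filter (fun j => l j = k + 1)).card : ℚ)) ^ 2) / 2
        + (ℓ : ℚ) / 2 := by
    set B := ∑ i ∈ range ℓ, ∑ j ∈ range ℓ, if l i = l j ∧ i ≤ j then (1:ℚ) else 0 with hBdef
    have hswap : B = ∑ i ∈ range ℓ, ∑ j ∈ range ℓ,
        if l j = l i ∧ j ≤ i then (1:ℚ) else 0 := by
      rw [hBdef, Finset.sum_comm]
    have h2B : B + B = (∑ i ∈ range ℓ, ∑ j ∈ range ℓ, if l i = l j then (1:ℚ) else 0)
        + ℓ := by
      nth_rewrite 2 [hswap]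
      rw [hBdef, ← Finset.sum_add_distrib]
      simp only [← Finset.sum_add_distrib]
      have pt : ∀ i ∈ range ℓ, ∀ j ∈ range ℓ,
          ((if l i = l j ∧ i ≤ j then (1:ℚ) else 0) + (if l j = l i ∧ j ≤ i then (1:ℚ) else 0))
          = (if l i = l j then (1:ℚ) else 0) + (if i = j then (1:ℚ) else 0) := by
        intro i _ j _
        by_cases he : l i = l j
        · rcases Nat.lt_trichotomy i j with h | h | h
          · rw [if_pos ⟨he, h.le⟩, if_neg (fun hc => absurd hc.2 (by omega : ¬ j ≤ i)),
              if_pos he, if_neg (by omega : ¬ i = j)]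
          · subst h
            simp
          · rw [if_neg (fun hc => absurd hc.2 (by omega : ¬ i ≤ j)),
              if_pos ⟨he.symm, h.le⟩, if_pos he, if_neg (by omega : ¬ i = j)]
            ring
        · rw [if_neg (fun hc => he hc.1), if_neg (fun hc => he hc.1.symm), if_neg he,
            if_neg (fun hc : i = j => he (by rw [hc]))]
      rw [Finset.sum_congr rfl fun i hi => Finset.sum_congr rfl fun j hj => pt i hi j hj]
      simp only [Finset.sum_add_distrib]
      congr 1
      have hdiag : ∀ i ∈ range ℓ, (∑ j ∈ range ℓ, if i = j then (1:ℚ) else 0) = 1 := by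
        intro i hi
        rw [Finset.sum_ite_eq]
        simp [hi]
      rw [Finset.sum_congr rfl hdiag, Finset.sum_const, Finset.card_range, nsmul_eq_mul,
        mul_one]
    have hC : (∑ i ∈ range ℓ, ∑ j ∈ range ℓ, if l i = l j then (1:ℚ) else 0)
        = ∑ k ∈ range (l 0), ((((range ℓ).filter (fun j => l j = k + 1)).card : ℚ)) ^ 2 := by
      have hCpt : ∀ i ∈ range ℓ, ∀ j ∈ range ℓ,
          (if l i = l j then (1:ℚ) else 0)
          = ∑ k ∈ range (l 0),
              (if l i = k+1 then (1:ℚ) else 0) * (if l j = k+1 then (1:ℚ) else 0) := by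
        intro i hi j hj
        have h1 : 0 < l i := hpos i (mem_range.mp hi)
        have h2 : l i ≤ l 0 := hl (Nat.zero_le i)
        have h3 : 0 < l j := hpos j (mem_range.mp hj)
        have h4 : l j ≤ l 0 := hl (Nat.zero_le j)
        have e : ∀ k : ℕ, (if l i = k+1 then (1:ℚ) else 0) * (if l j = k+1 then (1:ℚ) else 0)
            = if l i = k+1 ∧ l j = k+1 then (1:ℚ) else 0 := by
          intro k
          rcases em (l i = k+1) with ha | ha <;> rcases em (l j = k+1) with hb | hb <;>
            simp [ha, hb]
        rw [Finset.sum_congr rfl fun k _ => e k]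
        by_cases he : l i = l j
        · rw [if_pos he]
          have e2 : ∀ k, (l i = k+1 ∧ l j = k+1) ↔ k = l i - 1 := by
            intro k; omega
          rw [Finset.sum_congr rfl fun k _ => if_congr (e2 k) rfl rfl,
            Finset.sum_ite_eq' (range (l 0))]
          rw [if_pos (mem_range.mpr (by omega))]
        · rw [if_neg he]
          rw [Finset.sum_congr rfl fun k _ =>
            if_neg (fun hc : l i = k+1 ∧ l j = k+1 => he (by omega)), Finset.sum_const_zero]
      rw [Finset.sum_congr rfl fun i hi => Finset.sum_congr rfl fun j hj => hCpt i hi j hj]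
      have step1 : ∀ i ∈ range ℓ,
          (∑ j ∈ range ℓ, ∑ k ∈ range (l 0),
            (if l i = k+1 then (1:ℚ) else 0) * (if l j = k+1 then (1:ℚ) else 0))
          = ∑ k ∈ range (l 0), (if l i = k+1 then (1:ℚ) else 0) *
              ((((range ℓ).filter (fun j => l j = k + 1)).card : ℚ)) := by
        intro i _
        rw [Finset.sum_comm]
        refine Finset.sum_congr rfl fun k _ => ?_
        rw [← Finset.mul_sum, Finset.sum_boole]
      rw [Finset.sum_congr rfl step1, Finset.sum_comm]
      refine Finset.sum_congr rfl fun k _ => ?_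
      rw [← Finset.sum_mul, Finset.sum_boole, sq]
    have h2B' := h2B
    rw [hC] at h2B'
    linarith
  rw [hA, hB]
  ring
end

section
/- Let v be a summable sequence of reals with v_1 ≥ v_2 ≥ … ≥ 0, and let h(v) = ‖v‖² − ‖v − Lv‖² where L is the left shift. Then h(v) ≤ 2‖v‖₁ v_2 − 3v_2², where ‖v‖₁ = Σ_i v_i. -/
/-- For a summable weakly decreasing nonnegative sequence `v`,
`h(v) = ‖v‖² − ‖v − Lv‖² ≤ 2‖v‖₁ v₂ − 3v₂²` (here `v₂ = v 1` with 0-indexing). -/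
theorem stmt_12 (v : ℕ → ℝ) (hsum : Summable v) (hmono : Antitone v)
    (hnonneg : ∀ i, 0 ≤ v i) :
    ((∑' i, (v i) ^ 2) - ∑' i, (v i - v (i + 1)) ^ 2) ≤
      2 * (∑' i, v i) * v 1 - 3 * (v 1) ^ 2 := by
  have hv0 : ∀ i, v i ≤ v 0 := fun i => hmono (Nat.zero_le i)
  have hd : ∀ i, 0 ≤ v i - v (i + 1) := fun i => sub_nonneg.2 (hmono (Nat.le_succ i))
  have hv2 : Summable (fun i => v i ^ 2) := by
    refine Summable.of_nonneg_of_le (fun i => sq_nonneg _) (fun i => ?_) (hsum.mul_left (v 0))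
    have h1 := hnonneg i; have h2 := hv0 i; nlinarith
  have hd2 : Summable (fun i => (v i - v (i + 1)) ^ 2) := by
    refine Summable.of_nonneg_of_le (fun i => sq_nonneg _) (fun i => ?_) (hsum.mul_left (v 0))
    have h1 := hnonneg i; have h2 := hv0 i; have h3 := hd i; have h4 := hnonneg (i + 1)
    nlinarith
  have hf : Summable (fun i => v i ^ 2 - (v i - v (i + 1)) ^ 2) := hv2.sub hd2
  have hs1 : Summable (fun i => v (i + 1)) := (summable_nat_add_iff 1).2 hsum
  have hs2 : Summable (fun i => v (i + 2)) := (summable_nat_add_iff 2).2 hsum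
  have hfs : Summable (fun i => v (i + 1) ^ 2 - (v (i + 1) - v (i + 2)) ^ 2) := by
    have := (summable_nat_add_iff (f := fun i => v i ^ 2 - (v i - v (i + 1)) ^ 2) 1).2 hf
    simpa using this
  rw [← Summable.tsum_sub hv2 hd2]
  rw [Summable.tsum_eq_zero_add hf]
  have hS : (∑' i, v i) = v 0 + (v 1 + ∑' i, v (i + 2)) := by
    rw [Summable.tsum_eq_zero_add hsum, Summable.tsum_eq_zero_add hs1]
  have key : (∑' i, (v (i + 1) ^ 2 - (v (i + 1) - v (i + 2)) ^ 2))
      ≤ ∑' i, 2 * v 1 * v (i + 2) := by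
    refine Summable.tsum_le_tsum (fun i => ?_) hfs (hs2.mul_left _)
    have h1 : v (i + 1) ≤ v 1 := hmono (by omega)
    have h2 : v (i + 2) ≤ v (i + 1) := hmono (by omega)
    have h3 : 0 ≤ v (i + 2) := hnonneg _
    nlinarith
  have key' : (∑' i, (v (i + 1) ^ 2 - (v (i + 1) - v (i + 2)) ^ 2))
      ≤ 2 * v 1 * ∑' i, v (i + 2) := by
    rw [← tsum_mul_left]; exact key
  have e : (∑' i, (fun i => v i ^ 2 - (v i - v (i + 1)) ^ 2) (i + 1))
      = ∑' i, (v (i + 1) ^ 2 - (v (i + 1) - v (i + 2)) ^ 2) := by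
    norm_num
  rw [hS]
  nlinarith [key', e]
end

section
/- Let v be a summable sequence of reals with v_1 ≥ v_2 ≥ … ≥ 0 and v_1 ≥ ‖v‖₁/2. Then h(v) := ‖v‖² − ‖v−Lv‖² satisfies h(v) ≤ ‖v‖₁ v_1 − (3/4) v_1². -/
set_option maxHeartbeats 1000000

/-- For a summable weakly decreasing nonnegative sequence `v` with `v₁ ≥ ‖v‖₁/2`,
`h(v) = ‖v‖² − ‖v − Lv‖² ≤ ‖v‖₁ v₁ − (3/4) v₁²` (here `v₁ = v 0` with 0-indexing). -/
theorem stmt_13 (v : ℕ → ℝ) (hsum : Summable v) (hmono : Antitone v)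
    (hnonneg : ∀ i, 0 ≤ v i) (hbig : (∑' i, v i) / 2 ≤ v 0) :
    ((∑' i, (v i) ^ 2) - ∑' i, (v i - v (i + 1)) ^ 2) ≤
      (∑' i, v i) * v 0 - (3 / 4) * (v 0) ^ 2 := by
  have hv0 : ∀ j, v j ≤ v 0 := fun j => hmono (Nat.zero_le j)
  have hvs : ∀ j : ℕ, Summable (fun k => v (k + j)) := fun j => (summable_nat_add_iff j).2 hsum
  have hsummk : ∀ j : ℕ, Summable (fun k => (-1:ℝ)^k * v (k + j)) := by
    intro j
    apply Summable.of_norm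
    have h : ∀ k, ‖(-1:ℝ)^k * v (k + j)‖ = v (k + j) := by
      intro k
      rw [norm_mul, norm_pow, norm_neg, norm_one, one_pow, one_mul,
        Real.norm_eq_abs, abs_of_nonneg (hnonneg _)]
    simpa only [h] using hvs j
  set u : ℕ → ℝ := fun j => ∑' k, (-1:ℝ)^k * v (k + j) with hu
  -- recursion: u j = v j - u (j+1)
  have hrec : ∀ j, v j = u j + u (j + 1) := by
    intro j
    have h1 := Summable.tsum_eq_zero_add (hsummk j)
    have h2 : ∀ k : ℕ, (-1:ℝ)^(k+1) * v (k + 1 + j) = -((-1:ℝ)^k * v (k + (j+1))) := by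
      intro k
      have hidx : k + 1 + j = k + (j + 1) := by omega
      rw [hidx, pow_succ]; ring
    have h3 : u j = v j + ∑' k, -((-1:ℝ)^k * v (k + (j+1))) := by
      rw [hu]
      simp only [h1, pow_zero, one_mul, Nat.zero_add]
      congr 1
      exact tsum_congr h2
    rw [h3, tsum_neg]
    simp [hu]
  -- nonnegativity of u
  have hunonneg : ∀ j, 0 ≤ u j := by
    intro j
    have hve : Summable (fun k => v (2*k + j)) :=
      hsum.comp_injective (fun a b h => by simp only [] at h; omega : Function.Injective (fun k => 2*k + j))
    have hvo : Summable (fun k => v (2*k + 1 + j)) :=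
      hsum.comp_injective (fun a b h => by simp only [] at h; omega : Function.Injective (fun k => 2*k + 1 + j))
    have he : Summable (fun k => (-1:ℝ)^(2*k) * v (2*k + j)) := by
      apply Summable.of_norm
      have h : ∀ k : ℕ, ‖(-1:ℝ)^(2*k) * v (2*k + j)‖ = v (2*k + j) := by
        intro k
        rw [norm_mul, norm_pow, norm_neg, norm_one, one_pow, one_mul,
          Real.norm_eq_abs, abs_of_nonneg (hnonneg _)]
      simpa only [h] using hve
    have ho : Summable (fun k => (-1:ℝ)^(2*k+1) * v (2*k + 1 + j)) := by
      apply Summable.of_norm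
      have h : ∀ k : ℕ, ‖(-1:ℝ)^(2*k+1) * v (2*k + 1 + j)‖ = v (2*k + 1 + j) := by
        intro k
        rw [norm_mul, norm_pow, norm_neg, norm_one, one_pow, one_mul,
          Real.norm_eq_abs, abs_of_nonneg (hnonneg _)]
      simpa only [h] using hvo
    have hsplit := tsum_even_add_odd (f := fun k => (-1:ℝ)^k * v (k + j)) he ho
    have he' : (∑' k, (-1:ℝ)^(2*k) * v (2*k + j)) = ∑' k, v (2*k + j) := by
      apply tsum_congr; intro k; rw [pow_mul]; norm_num
    have ho' : (∑' k, (-1:ℝ)^(2*k+1) * v (2*k + 1 + j)) = -∑' k, v (2*k + 1 + j) := by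
      rw [← tsum_neg]
      apply tsum_congr; intro k; rw [pow_succ, pow_mul]; norm_num
    have hle : (∑' k, v (2*k + 1 + j)) ≤ ∑' k, v (2*k + j) :=
      Summable.tsum_le_tsum (fun k => hmono (by omega)) hvo hve
    have : u j = (∑' k, v (2*k + j)) - ∑' k, v (2*k + 1 + j) := by
      beta_reduce at hsplit
      have hbeta : u j = ∑' k, (-1:ℝ)^k * v (k + j) := rfl
      rw [hbeta, ← hsplit, he', ho']
      ring
    rw [this]
    linarith
  have hule : ∀ j, u j ≤ v j := fun j => by
    have h1 := hrec j; have h2 := hunonneg (j+1); linarith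
  have hub : ∀ j, u j ≤ v 0 := fun j => le_trans (hule j) (hv0 j)
  have husum : Summable u := hsum.of_nonneg_of_le hunonneg hule
  have hu1 : Summable (fun j => u (j+1)) := (summable_nat_add_iff 1).2 husum
  have hu2 : Summable (fun j => u (j+2)) := (summable_nat_add_iff 2).2 husum
  have hcmp : Summable (fun j => v 0 * v j) := hsum.mul_left (v 0)
  -- various summabilities by comparison with v0 * v j
  have hsq : Summable (fun j => v j ^ 2) := by
    apply Summable.of_nonneg_of_le (fun j => sq_nonneg _) (fun j => ?_) hcmp
    nlinarith [hnonneg j, hv0 j]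
  have hdsq : Summable (fun j => (v j - v (j+1)) ^ 2) := by
    apply Summable.of_nonneg_of_le (fun j => sq_nonneg _) (fun j => ?_) hcmp
    nlinarith [hnonneg j, hnonneg (j+1), hv0 j, hmono (Nat.le_succ j)]
  have hA : Summable (fun j => u j * u (j+1)) := by
    apply Summable.of_nonneg_of_le
      (fun j => mul_nonneg (hunonneg j) (hunonneg (j+1))) (fun j => ?_) hcmp
    have := hule j; have := hub (j+1); have := hunonneg j; have := hunonneg (j+1)
    nlinarith [hnonneg j]
  have hA1 : Summable (fun j => u (j+1) * u (j+2)) := (summable_nat_add_iff 1).2 hA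
  have hB : Summable (fun j => u j * u (j+2)) := by
    apply Summable.of_nonneg_of_le
      (fun j => mul_nonneg (hunonneg j) (hunonneg (j+2))) (fun j => ?_) hcmp
    have := hule j; have := hub (j+2); have := hunonneg j; have := hunonneg (j+2)
    nlinarith [hnonneg j]
  have husq : Summable (fun j => u j ^ 2) := by
    apply Summable.of_nonneg_of_le (fun j => sq_nonneg _) (fun j => ?_) hcmp
    have := hule j; have := hub j; have := hunonneg j
    nlinarith [hnonneg j]
  have hC : Summable (fun j => u (j+1) ^ 2) := (summable_nat_add_iff 1).2 husq
  have hC1 : Summable (fun j => u (j+2) ^ 2) := (summable_nat_add_iff 2).2 husq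
  have hUV : Summable (fun j => u (j+2) * v j) := by
    apply Summable.of_nonneg_of_le
      (fun j => mul_nonneg (hunonneg (j+2)) (hnonneg j)) (fun j => ?_) hcmp
    exact mul_le_mul_of_nonneg_right (hub (j+2)) (hnonneg j)
  -- main identity
  have step1 : ((∑' i, (v i) ^ 2) - ∑' i, (v i - v (i + 1)) ^ 2)
      = ∑' j, (2 * (u j * u (j+1)) + 2 * (u j * u (j+2)) + (u (j+1)^2 - u (j+2)^2)) := by
    rw [← Summable.tsum_sub hsq hdsq]
    apply tsum_congr
    intro j
    have h0 := hrec j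
    have h1 := hrec (j+1)
    have : v (j+1) = u (j+1) + u (j+2) := h1
    rw [h0, this]; ring
  have step2 : (∑' j, (2 * (u j * u (j+1)) + 2 * (u j * u (j+2)) + (u (j+1)^2 - u (j+2)^2)))
      = 2 * (∑' j, u j * u (j+1)) + 2 * (∑' j, u j * u (j+2))
        + ((∑' j, u (j+1)^2) - (∑' j, u (j+2)^2)) := by
    rw [Summable.tsum_add ((hA.mul_left 2).add (hB.mul_left 2)) (hC.sub hC1),
      Summable.tsum_add (hA.mul_left 2) (hB.mul_left 2),
      Summable.tsum_sub hC hC1, tsum_mul_left, tsum_mul_left]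
  have step3 : (∑' j, u (j+1)^2) - (∑' j, u (j+2)^2) = u 1 ^ 2 := by
    have := Summable.tsum_eq_zero_add hC
    linarith [this]
  have step4 : (∑' j, u j * u (j+1)) = u 0 * u 1 + ∑' j, u (j+1) * u (j+2) := by
    have := Summable.tsum_eq_zero_add hA
    simpa using this
  have step5 : (∑' j, u (j+1) * u (j+2)) + (∑' j, u j * u (j+2)) = ∑' j, u (j+2) * v j := by
    rw [← Summable.tsum_add hA1 hB]
    apply tsum_congr
    intro j
    rw [hrec j]; ring
  have hbound : (∑' j, u (j+2) * v j) ≤ (∑' j, u (j+2)) * v 0 := by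
    rw [← tsum_mul_right]
    exact Summable.tsum_le_tsum
      (fun j => mul_le_mul_of_nonneg_left (hv0 j) (hunonneg (j+2))) hUV (hu2.mul_right _)
  -- sum relations
  have hS : (∑' i, v i) = u 0 + 2 * ∑' j, u (j+1) := by
    have h1 : (∑' i, v i) = ∑' j, (u j + u (j+1)) := tsum_congr (fun j => hrec j)
    rw [h1, Summable.tsum_add husum hu1, Summable.tsum_eq_zero_add husum]
    ring
  have hW : (∑' j, u (j+1)) = u 1 + ∑' j, u (j+2) := by
    have := Summable.tsum_eq_zero_add hu1
    simpa using this
  -- wrap up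
  have hLHS : ((∑' i, (v i) ^ 2) - ∑' i, (v i - v (i + 1)) ^ 2)
      ≤ 2 * (u 0 * u 1) + u 1 ^ 2 + 2 * ((∑' j, u (j+2)) * v 0) := by
    rw [step1, step2, step3, step4]
    have := step5
    nlinarith [hbound]
  have hv0u : v 0 = u 0 + u 1 := hrec 0
  rw [hS, hW]
  set W2 := ∑' j, u (j+2) with hW2
  rw [hv0u] at hLHS ⊢
  nlinarith [sq_nonneg (u 0 - u 1), hLHS]
end

section
/- For every summable weakly decreasing nonnegative real sequence v, h(v) := ‖v‖² − ‖v − Lv‖² ≤ ‖v‖₁²/3. -/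
/-- For every summable weakly decreasing nonnegative sequence `v`,
`h(v) = ‖v‖² − ‖v − Lv‖² ≤ ‖v‖₁² / 3`. -/
theorem stmt_14 (v : ℕ → ℝ) (hsum : Summable v) (hmono : Antitone v)
    (hnonneg : ∀ i, 0 ≤ v i) :
    ((∑' i, (v i) ^ 2) - ∑' i, (v i - v (i + 1)) ^ 2) ≤ (∑' i, v i) ^ 2 / 3 := by
  have hstep : ∀ i, v (i + 1) ≤ v i := fun i => hmono (Nat.le_succ i)
  have hsq : Summable (fun i => v i ^ 2) := by
    apply Summable.of_nonneg_of_le (fun i => sq_nonneg _) (fun i => ?_) (hsum.mul_left (v 0))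
    have h0 : v i ≤ v 0 := hmono (Nat.zero_le i)
    nlinarith [hnonneg i]
  have hdle : ∀ i, (v i - v (i + 1)) ^ 2 ≤ v i ^ 2 := fun i =>
    pow_le_pow_left₀ (sub_nonneg.2 (hstep i)) (by linarith [hnonneg (i + 1)]) 2
  have hd : Summable (fun i => (v i - v (i + 1)) ^ 2) :=
    Summable.of_nonneg_of_le (fun i => sq_nonneg _) hdle hsq
  rw [← Summable.tsum_sub hsq hd]
  set T : ℕ → ℝ := fun i => ∑' j, v (j + i) with hT
  have hshift : ∀ i, Summable (fun j => v (j + i)) := fun i => (summable_nat_add_iff i).2 hsum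
  have hTnn : ∀ i, 0 ≤ T i := fun i => tsum_nonneg (fun j => hnonneg _)
  have hrec : ∀ i, T i = v i + T (i + 1) := by
    intro i
    have h1 := Summable.tsum_eq_zero_add (hshift i)
    rw [hT]
    simp only
    rw [h1]
    congr 1
    · simp
    · exact tsum_congr fun j => by congr 1; omega
  have hT0 : T 0 = ∑' i, v i := tsum_congr fun j => by simp
  have hvT : ∀ i, v i ≤ T i := fun i => by
    have := hTnn (i + 1); rw [hrec i]; linarith
  set g : ℕ → ℝ := fun i => T i ^ 2 - (v i - 2 * v (i + 1) + T (i + 2)) ^ 2 with hg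
  have key : ∀ i, v i ^ 2 - (v i - v (i + 1)) ^ 2 ≤ (g i - g (i + 1)) / 3 := by
    intro i
    have h1 : T i = v i + v (i + 1) + T (i + 2) := by rw [hrec i, hrec (i + 1)]; ring
    have h2 : T (i + 1) = v (i + 1) + T (i + 2) := hrec (i + 1)
    have h3 : T (i + 3) = T (i + 2) - v (i + 2) := by have := hrec (i + 2); linarith
    have hbc : v (i + 2) ≤ v (i + 1) := hstep (i + 1)
    have hc : 0 ≤ v (i + 2) := hnonneg _
    have hcr : v (i + 2) ≤ T (i + 2) := hvT (i + 2)
    rw [hg]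
    simp only
    rw [show i + 1 + 1 = i + 2 from rfl, show i + 1 + 2 = i + 3 from rfl, h1, h2, h3]
    nlinarith [mul_nonneg (sub_nonneg.2 hbc) (sub_nonneg.2 hcr), sq_nonneg (v (i + 2))]
  have hgnn : ∀ n, 0 ≤ g n := by
    intro n
    have h1 : T n = v n + v (n + 1) + T (n + 2) := by rw [hrec n, hrec (n + 1)]; ring
    have hpsi : (v n - 2 * v (n + 1) + T (n + 2)) ^ 2 ≤ T n ^ 2 := by
      rw [h1]
      apply sq_le_sq'
      · have := hstep n; have := hnonneg n; have := hTnn (n + 2); linarith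
      · have := hnonneg (n + 1); linarith
    rw [hg]
    simp only
    linarith
  have hbound : ∑' i, (v i ^ 2 - (v i - v (i + 1)) ^ 2) ≤ g 0 / 3 := by
    apply Real.tsum_le_of_sum_range_le (fun i => sub_nonneg.2 (hdle i))
    intro n
    calc ∑ i ∈ Finset.range n, (v i ^ 2 - (v i - v (i + 1)) ^ 2)
        ≤ ∑ i ∈ Finset.range n, (g i - g (i + 1)) / 3 :=
          Finset.sum_le_sum fun i _ => key i
      _ = (∑ i ∈ Finset.range n, (g i - g (i + 1))) / 3 := by
          rw [Finset.sum_div]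
      _ = (g 0 - g n) / 3 := by rw [Finset.sum_range_sub' g n]
      _ ≤ g 0 / 3 := by gcongr; · norm_num; · linarith [hgnn n]
  have hg0 : g 0 ≤ (∑' i, v i) ^ 2 := by
    rw [hg]
    simp only
    rw [← hT0]
    have := sq_nonneg (v 0 - 2 * v 1 + T 2)
    linarith
  exact hbound.trans (by gcongr ?_ / 3)
end

section
/- For reals ‖v‖₁ = 1, v_1, v_3 with w = (v_1, 1 − v_1 − v_3, v_3, 0, 0, …) and h(w) = ‖w‖² − ‖w − Lw‖², one has v_1 − (3/4)v_1² − h(w) = (1/4)(2 − 3v_1 − 4v_3)², and in particular h(w) ≤ v_1 − (3/4)v_1². -/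
/-- For `w = (v₁, 1 − v₁ − v₃, v₃, 0, 0, …)` and `h(w) = ‖w‖² − ‖w − Lw‖²`,
one has `v₁ − (3/4)v₁² − h(w) = (1/4)(2 − 3v₁ − 4v₃)²`, and in particular
`h(w) ≤ v₁ − (3/4)v₁²`. -/
theorem stmt_15 (v₁ v₃ : ℝ)
    (w : ℕ → ℝ)
    (hw : w = fun i => if i = 0 then v₁ else if i = 1 then 1 - v₁ - v₃ else
      if i = 2 then v₃ else 0) :
    (v₁ - (3 / 4) * v₁ ^ 2 -
        ((∑' i, (w i) ^ 2) - ∑' i, (w i - w (i + 1)) ^ 2) =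
      (1 / 4) * (2 - 3 * v₁ - 4 * v₃) ^ 2) ∧
    ((∑' i, (w i) ^ 2) - ∑' i, (w i - w (i + 1)) ^ 2) ≤ v₁ - (3 / 4) * v₁ ^ 2 := by
  have h1 : (∑' i, (w i) ^ 2) = ∑ i ∈ Finset.range 3, (w i) ^ 2 := by
    apply tsum_eq_sum
    intro i hi
    simp only [Finset.mem_range, not_lt] at hi
    subst hw
    simp only []
    rw [if_neg (by omega), if_neg (by omega), if_neg (by omega)]
    ring
  have h2 : (∑' i, (w i - w (i + 1)) ^ 2) = ∑ i ∈ Finset.range 3, (w i - w (i + 1)) ^ 2 := by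
    apply tsum_eq_sum
    intro i hi
    simp only [Finset.mem_range, not_lt] at hi
    subst hw
    simp only []
    rw [if_neg (by omega), if_neg (by omega), if_neg (by omega),
        if_neg (by omega), if_neg (by omega), if_neg (by omega)]
    ring
  rw [h1, h2]
  subst hw
  norm_num [Finset.sum_range_succ]
  constructor
  · ring
  · nlinarith [sq_nonneg (2 - 3 * v₁ - 4 * v₃)]
end
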